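/- Under global mean reversion with X_t = M_t - μ bounded in [-1/2, 1/2] (up to a shift), the sample mean μ̂_t = (1/t)∑_{τ=1}^t M_τ satisfies, uniformly over 1 ≤ t ≤ T with probability at least 1-δ: |μ̂_t - μ| ≤ sqrt(4 log(2T/δ)/t). -/

import Mathlib

/-!
Since `|X_t| ≤ 1`, the chord bound for `exp` on `[-1, 1]` gives
`cosh (s + l x) ≤ cosh l · cosh s + sinh l · sinh s · x`.
Taking expectations with `s = l S_t`, `x = X_{t+1}` and conditioning on `ℱ_t`, the last term has the
sign of `E[X_{t+1} | ℱ_t] · S_t ≤ 0`, so `E cosh (l S_t) ≤ (cosh l)^t ≤ exp (t l² / 2)`, exactly as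
for a martingale with bounded increments. Markov's inequality for `cosh (a S_t)` then gives
`P(|S_t / t| > a) ≤ 2 exp (-t a² / 2)`, and a union bound over `t ≤ T` with
`a = √(4 log (2T/δ) / t)` finishes the proof.
-/

open MeasureTheory Finset Real

section

variable {Ω : Type*} {m : MeasurableSpace Ω}

lemma cosh_add_mul_le {x : ℝ} (hx : |x| ≤ 1) (s l : ℝ) :
    cosh (s + l * x) ≤ cosh l * cosh s + sinh l * (sinh s * x) := by
  have h₁ := mul_le_mul_of_nonneg_left (exp_mul_le_cosh_add_mul_sinh hx l) (exp_pos s).le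
  have h₂ := mul_le_mul_of_nonneg_left
    (exp_mul_le_cosh_add_mul_sinh (t := -x) (by rwa [abs_neg]) l) (exp_pos (-s)).le
  have hsplit : cosh (s + l * x) = (exp s * exp (x * l) + exp (-s) * exp (-x * l)) / 2 := by
    rw [cosh_eq, ← exp_add, ← exp_add]
    ring_nf
  rw [hsplit, cosh_eq s, sinh_eq s]
  linear_combination (h₁ + h₂) / 2

lemma sinh_mul_mul_nonpos {l s a : ℝ} (hl : 0 ≤ l) (h : a * s ≤ 0) : sinh (l * s) * a ≤ 0 := by
  rcases lt_trichotomy s 0 with hs | rfl | hs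
  · exact mul_nonpos_of_nonpos_of_nonneg
      (sinh_nonpos_iff.2 (mul_nonpos_of_nonneg_of_nonpos hl hs.le)) (by nlinarith)
  · simp
  · exact mul_nonpos_of_nonneg_of_nonpos (sinh_nonneg_iff.2 (by positivity)) (by nlinarith)

lemma measure_lt_abs_le_integral_cosh {ℙ : Measure Ω} [IsFiniteMeasure ℙ] {Y : Ω → ℝ} {l : ℝ}
    (hl : 0 ≤ l) (hint : Integrable (fun ω ↦ cosh (l * Y ω)) ℙ) (c : ℝ) :
    ℙ {ω | c < |Y ω|} ≤ ENNReal.ofReal (2 * exp (-(l * c)) * ∫ ω, cosh (l * Y ω) ∂ℙ) := by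
  have hsub : {ω | c < |Y ω|} ⊆ {ω | exp (l * c) / 2 ≤ cosh (l * Y ω)} := fun ω hω ↦
    calc exp (l * c) / 2 ≤ exp |l * Y ω| / 2 := by
          rw [abs_mul, abs_of_nonneg hl]
          gcongr
          exact hω.le
      _ ≤ cosh (l * Y ω) := by
          rw [cosh_eq]
          gcongr
          exact exp_abs_le _
  have hmarkov := mul_meas_ge_le_integral_of_nonneg
    (ae_of_all _ fun ω ↦ (cosh_pos (l * Y ω)).le) hint (exp (l * c) / 2)
  calc ℙ {ω | c < |Y ω|} ≤ ℙ {ω | exp (l * c) / 2 ≤ cosh (l * Y ω)} := measure_mono hsub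
    _ = ENNReal.ofReal (ℙ.real {ω | exp (l * c) / 2 ≤ cosh (l * Y ω)}) :=
        (ofReal_measureReal (measure_ne_top _ _)).symm
    _ ≤ _ := by
      refine ENNReal.ofReal_le_ofReal ?_
      rw [exp_neg, show 2 * (exp (l * c))⁻¹ = (exp (l * c) / 2)⁻¹ by
        rw [inv_div, div_eq_mul_inv]]
      exact (le_inv_mul_iff₀ (by positivity)).2 hmarkov

lemma integral_mul_condExp_of_stronglyMeasurable {m₀ : MeasurableSpace Ω} {μ : Measure Ω}
    (hm : m ≤ m₀) [SigmaFinite (μ.trim hm)] {f g : Ω → ℝ} (hf : StronglyMeasurable[m] f)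
    (hfg : Integrable (f * g) μ) (hg : Integrable g μ) :
    ∫ ω, f ω * μ[g | m] ω ∂μ = ∫ ω, f ω * g ω ∂μ :=
  (integral_congr_ae (condExp_mul_of_stronglyMeasurable_left hf hfg hg)).symm.trans
    (integral_condExp hm)

def partialSum (X : ℕ → Ω → ℝ) (n : ℕ) (ω : Ω) : ℝ := ∑ τ ∈ Icc 1 n, X τ ω

@[simp]
lemma partialSum_zero (X : ℕ → Ω → ℝ) : partialSum X 0 = 0 := by
  ext
  simp [partialSum]

lemma partialSum_succ (X : ℕ → Ω → ℝ) (n : ℕ) (ω : Ω) :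
    partialSum X (n + 1) ω = partialSum X n ω + X (n + 1) ω :=
  sum_Icc_succ_top (by omega) _

lemma adapted_partialSum {ℱ : Filtration ℕ m} {X : ℕ → Ω → ℝ} (hX : Adapted ℱ X) :
    Adapted ℱ (partialSum X) := fun _ ↦
  Finset.measurable_sum _ fun τ hτ ↦ (hX τ).mono (ℱ.mono (mem_Icc.1 hτ).2) le_rfl

lemma ae_abs_partialSum_le {ℙ : Measure Ω} {X : ℕ → Ω → ℝ} (hXb : ∀ t, ∀ᵐ ω ∂ℙ, |X t ω| ≤ 1)
    (n : ℕ) : ∀ᵐ ω ∂ℙ, |partialSum X n ω| ≤ n := by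
  filter_upwards [ae_all_iff.2 hXb] with ω hω
  calc |partialSum X n ω| ≤ ∑ τ ∈ Icc 1 n, |X τ ω| := abs_sum_le_sum_abs _ _
    _ ≤ ∑ τ ∈ Icc 1 n, (1 : ℝ) := sum_le_sum fun τ _ ↦ hω τ
    _ = n := by simp

section MeanReversion

variable {ℙ : Measure Ω} [IsProbabilityMeasure ℙ] {ℱ : Filtration ℕ m} {X : ℕ → Ω → ℝ}

lemma integrable_comp_partialSum (hX : Adapted ℱ X) (hXb : ∀ t, ∀ᵐ ω ∂ℙ, |X t ω| ≤ 1)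
    {g : ℝ → ℝ} (hg : Continuous g) (n : ℕ) :
    Integrable (fun ω ↦ g (partialSum X n ω)) ℙ := by
  obtain ⟨C, hC⟩ := (isCompact_Icc (a := -(n : ℝ)) (b := n)).exists_bound_of_continuousOn
    hg.continuousOn
  refine Integrable.of_bound
    (hg.measurable.comp ((adapted_partialSum hX n).mono (ℱ.le n) le_rfl)).aestronglyMeasurable C ?_
  filter_upwards [ae_abs_partialSum_le hXb n] with ω hω
  exact hC _ (Set.mem_Icc.2 (abs_le.1 hω))

lemma integral_cosh_mul_partialSum_succ_le (hX : Adapted ℱ X)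
    (hXb : ∀ t, ∀ᵐ ω ∂ℙ, |X t ω| ≤ 1) {l : ℝ} (hl : 0 ≤ l) (n : ℕ)
    (hmr : ∀ᵐ ω ∂ℙ, ℙ[X (n + 1) | ℱ n] ω * partialSum X n ω ≤ 0) :
    ∫ ω, cosh (l * partialSum X (n + 1) ω) ∂ℙ ≤
      cosh l * ∫ ω, cosh (l * partialSum X n ω) ∂ℙ := by
  set f : Ω → ℝ := fun ω ↦ sinh (l * partialSum X n ω)
  have hf : StronglyMeasurable[ℱ n] f :=
    (continuous_sinh.measurable.comp ((adapted_partialSum hX n).const_mul l)).stronglyMeasurable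
  have hXi : Integrable (X (n + 1)) ℙ :=
    .of_bound ((hX (n + 1)).mono (ℱ.le _) le_rfl).aestronglyMeasurable 1 (hXb (n + 1))
  have hfX : Integrable (fun ω ↦ f ω * X (n + 1) ω) ℙ :=
    ((integrable_comp_partialSum hX hXb (g := fun s ↦ sinh (l * s)) (by fun_prop) n).bdd_mul
      ((hX (n + 1)).mono (ℱ.le _) le_rfl).aestronglyMeasurable (hXb (n + 1))).congr
      (ae_of_all _ fun _ ↦ mul_comm _ _)
  have hcosh : Integrable (fun ω ↦ cosh (l * partialSum X n ω)) ℙ :=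
    integrable_comp_partialSum hX hXb (g := fun s ↦ cosh (l * s)) (by fun_prop) n
  have hdrift : ∫ ω, f ω * X (n + 1) ω ∂ℙ ≤ 0 := by
    rw [← integral_mul_condExp_of_stronglyMeasurable (ℱ.le n) hf hfX hXi]
    exact integral_nonpos_of_ae (hmr.mono fun ω h ↦ sinh_mul_mul_nonpos hl h)
  calc ∫ ω, cosh (l * partialSum X (n + 1) ω) ∂ℙ
      ≤ ∫ ω, (cosh l * cosh (l * partialSum X n ω) + sinh l * (f ω * X (n + 1) ω)) ∂ℙ := by
        refine integral_mono_of_nonneg (ae_of_all _ fun ω ↦ (cosh_pos _).le)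
          ((hcosh.const_mul _).add (hfX.const_mul _)) ?_
        filter_upwards [hXb (n + 1)] with ω hω
        rw [partialSum_succ, mul_add]
        exact cosh_add_mul_le hω _ _
    _ = cosh l * ∫ ω, cosh (l * partialSum X n ω) ∂ℙ +
          sinh l * ∫ ω, f ω * X (n + 1) ω ∂ℙ := by
        rw [integral_add (hcosh.const_mul _) (hfX.const_mul _), integral_const_mul,
          integral_const_mul]
    _ ≤ cosh l * ∫ ω, cosh (l * partialSum X n ω) ∂ℙ :=
        add_le_of_nonpos_right (mul_nonpos_of_nonneg_of_nonpos (sinh_nonneg_iff.2 hl) hdrift)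

lemma integral_cosh_mul_partialSum_le (hX : Adapted ℱ X) (hXb : ∀ t, ∀ᵐ ω ∂ℙ, |X t ω| ≤ 1)
    {l : ℝ} (hl : 0 ≤ l) (n : ℕ)
    (hmr : ∀ t < n, ∀ᵐ ω ∂ℙ, ℙ[X (t + 1) | ℱ t] ω * partialSum X t ω ≤ 0) :
    ∫ ω, cosh (l * partialSum X n ω) ∂ℙ ≤ exp (n * l ^ 2 / 2) := by
  induction n with
  | zero => simp
  | succ n ih =>
    calc ∫ ω, cosh (l * partialSum X (n + 1) ω) ∂ℙ
        ≤ cosh l * ∫ ω, cosh (l * partialSum X n ω) ∂ℙ :=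
          integral_cosh_mul_partialSum_succ_le hX hXb hl n (hmr n n.lt_succ_self)
      _ ≤ exp (l ^ 2 / 2) * exp (n * l ^ 2 / 2) :=
          mul_le_mul (cosh_le_exp_half_sq l) (ih fun t ht ↦ hmr t (ht.trans n.lt_succ_self))
            (integral_nonneg fun _ ↦ (cosh_pos _).le) (exp_pos _).le
      _ = exp ((n + 1 : ℕ) * l ^ 2 / 2) := by
          rw [← exp_add]
          push_cast
          ring_nf

lemma measure_lt_abs_partialSum_le (hX : Adapted ℱ X) (hXb : ∀ t, ∀ᵐ ω ∂ℙ, |X t ω| ≤ 1)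
    (n : ℕ) (hmr : ∀ t < n, ∀ᵐ ω ∂ℙ, ℙ[X (t + 1) | ℱ t] ω * partialSum X t ω ≤ 0)
    {a : ℝ} (ha : 0 ≤ a) :
    ℙ {ω | n * a < |partialSum X n ω|} ≤ ENNReal.ofReal (2 * exp (-(n * a ^ 2 / 2))) := by
  refine (measure_lt_abs_le_integral_cosh ha (integrable_comp_partialSum hX hXb
    (g := fun s ↦ cosh (a * s)) (by fun_prop) n) _).trans (ENNReal.ofReal_le_ofReal ?_)
  calc 2 * exp (-(a * (n * a))) * ∫ ω, cosh (a * partialSum X n ω) ∂ℙ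
      ≤ 2 * exp (-(a * (n * a))) * exp (n * a ^ 2 / 2) := by
        gcongr
        exact integral_cosh_mul_partialSum_le hX hXb ha n hmr
    _ = 2 * exp (-(n * a ^ 2 / 2)) := by
        rw [mul_assoc, ← exp_add]
        ring_nf

lemma measure_lt_abs_partialSum_div_le (hX : Adapted ℱ X)
    (hXb : ∀ t, ∀ᵐ ω ∂ℙ, |X t ω| ≤ 1) {n : ℕ} (hn : n ≠ 0)
    (hmr : ∀ t < n, ∀ᵐ ω ∂ℙ, ℙ[X (t + 1) | ℱ t] ω * partialSum X t ω ≤ 0) {a : ℝ} (ha : 0 ≤ a) :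
    ℙ {ω | a < |partialSum X n ω / n|} ≤ ENNReal.ofReal (2 * exp (-(n * a ^ 2 / 2))) := by
  have hn₀ : (0 : ℝ) < n := by positivity
  simp_rw [abs_div, Nat.abs_cast, lt_div_iff₀ hn₀, mul_comm a]
  exact measure_lt_abs_partialSum_le hX hXb n hmr ha

end MeanReversion

lemma mul_two_mul_exp_neg_two_mul_log_le {T δ : ℝ} (hδ : 0 < δ) (hδT : δ ≤ 2 * T) :
    T * (2 * exp (-(2 * log (2 * T / δ)))) ≤ δ := by
  have hT : 0 < T := by linarith
  rw [exp_neg, two_mul (log _), exp_add, exp_log (by positivity)]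
  field_simp
  nlinarith

lemma sum_Icc_div_sub_eq_partialSum_div (M : ℕ → Ω → ℝ) (μ : ℝ) {t : ℕ} (ht : t ≠ 0) (ω : Ω) :
    (∑ τ ∈ Icc 1 t, M τ ω) / t - μ = partialSum (fun τ ω ↦ M τ ω - μ) t ω / t := by
  simp only [partialSum, sum_sub_distrib, sum_const, Nat.card_Icc, add_tsub_cancel_right,
    nsmul_eq_mul]
  field_simp

end

/-- Under global mean reversion with `X t = M t - μ` (so `M t ∈ [0,1]`,
`μ ∈ [0,1]`, hence `|X t| ≤ 1`), the sample mean `μ̂_t = (1/t)∑_{τ=1}^t M τ` satisfies,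
uniformly over `1 ≤ t ≤ T` with probability at least `1 - δ`,
`|μ̂_t - μ| ≤ sqrt(4 log(2T/δ)/t)`. -/
theorem stmt5 {Ω : Type*} {m : MeasurableSpace Ω} (ℙ : Measure Ω) [IsProbabilityMeasure ℙ]
    (ℱ : Filtration ℕ m) (T : ℕ) (hT : 1 ≤ T)
    (M : ℕ → Ω → ℝ) (hadapted : Adapted ℱ M)
    (hMbdd : ∀ t, ∀ᵐ ω ∂ℙ, M t ω ∈ Set.Icc (0:ℝ) 1)
    (μ : ℝ) (hμ : μ ∈ Set.Icc (0:ℝ) 1)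
    (X : ℕ → Ω → ℝ) (hX : ∀ t ω, X t ω = M t ω - μ)
    (S : ℕ → Ω → ℝ) (hS : ∀ t ω, S t ω = ∑ τ ∈ Finset.Icc 1 t, X τ ω)
    (hmr : ∀ t ≤ T, ∀ᵐ ω ∂ℙ, (ℙ[X (t + 1) | ℱ t]) ω * S t ω ≤ 0)
    (δ : ℝ) (hδ : δ ∈ Set.Ioo (0:ℝ) 1) :
    ℙ {ω | ∃ t ∈ Finset.Icc 1 T,
        Real.sqrt (4 * Real.log (2 * T / δ) / t) <
          |(∑ τ ∈ Finset.Icc 1 t, M τ ω) / t - μ|} ≤ ENNReal.ofReal δ := by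
  obtain ⟨hδ₀, hδ₁⟩ := hδ
  obtain rfl : S = partialSum X := funext₂ hS
  obtain rfl : X = fun t ω ↦ M t ω - μ := funext₂ hX
  have hXb : ∀ t, ∀ᵐ ω ∂ℙ, |M t ω - μ| ≤ 1 := fun t ↦ (hMbdd t).mono fun _ hω ↦
    abs_sub_le_of_nonneg_of_le hω.1 hω.2 hμ.1 hμ.2
  have hδT : δ ≤ 2 * T := by linarith [(Nat.one_le_cast.2 hT : (1 : ℝ) ≤ T)]
  set L := log (2 * T / δ)
  have hL : 0 ≤ L := log_nonneg ((one_le_div hδ₀).2 hδT)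
  have htail : ∀ t ∈ Icc 1 T, ℙ {ω | √(4 * L / t) < |(∑ τ ∈ Icc 1 t, M τ ω) / t - μ|} ≤
      ENNReal.ofReal (2 * exp (-(2 * L))) := fun t ht ↦ by
    obtain ⟨ht₁, htT⟩ := mem_Icc.1 ht
    have ht₀ : (0 : ℝ) < t := by exact_mod_cast ht₁
    simp_rw [sum_Icc_div_sub_eq_partialSum_div M μ (t := t) (by omega)]
    convert measure_lt_abs_partialSum_div_le (fun t ↦ (hadapted t).sub_const μ) hXb (n := t)
      (by omega) (fun τ hτ ↦ hmr τ (by omega)) (sqrt_nonneg (4 * L / t)) using 4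
    rw [sq_sqrt (by positivity)]
    field_simp
    ring
  calc _ ≤ ∑ t ∈ Icc 1 T, ℙ {ω | √(4 * L / t) < |(∑ τ ∈ Icc 1 t, M τ ω) / t - μ|} :=
        (measure_mono (by rintro ω ⟨t, ht, h⟩; exact Set.mem_biUnion ht h)).trans
          (measure_biUnion_finset_le _ _)
    _ ≤ ∑ t ∈ Icc 1 T, ENNReal.ofReal (2 * exp (-(2 * L))) := sum_le_sum htail
    _ = ENNReal.ofReal (T * (2 * exp (-(2 * L)))) := by
        rw [sum_const, Nat.card_Icc, add_tsub_cancel_right, nsmul_eq_mul,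
          ENNReal.ofReal_mul (Nat.cast_nonneg T), ENNReal.ofReal_natCast]
    _ ≤ ENNReal.ofReal δ := ENNReal.ofReal_le_ofReal (mul_two_mul_exp_neg_two_mul_log_le hδ₀ hδT)
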